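/- arXiv:1011.2688 — 4 statements merged into one kernel-verified Lean document; each statement's English description precedes it below -/
import Mathlib

section
/- Every alignment (π,μ) of two sequences of length kn admits an r-partition (ν,τ) with k ≤ r ≤ ⌈2kn/(2n-1)⌉ such that for every j = 1,...,r-1, (ν_{j+1}-ν_j) + (τ_{j+1}-τ_j) ∈ {2n-1, 2n}, and (ν_{r+1}-ν_r) + (τ_{r+1}-τ_r) ≤ 2n. -/
/-- The set `ℬ^r_{k,n}` of `r`-partitions: pairs of nondecreasing sequences of
length `r+1` starting at `1`, ending at `k·n + 1`, whose block size sums lie in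
`{2n-1, 2n}` except possibly `≤ 2n` for the last block. -/
def PartSet (r k n : ℕ) : Set ((Fin (r + 1) → ℕ) × (Fin (r + 1) → ℕ)) :=
  {p | Monotone p.1 ∧ Monotone p.2 ∧ p.1 0 = 1 ∧ p.2 0 = 1 ∧
    p.1 (Fin.last r) = k * n + 1 ∧ p.2 (Fin.last r) = k * n + 1 ∧
    ∀ j : Fin r,
      ((j : ℕ) + 1 < r →
        (p.1 j.succ - p.1 j.castSucc) + (p.2 j.succ - p.2 j.castSucc)
          ∈ ({2 * n - 1, 2 * n} : Set ℕ)) ∧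
      ((j : ℕ) + 1 = r →
        (p.1 j.succ - p.1 j.castSucc) + (p.2 j.succ - p.2 j.castSucc) ≤ 2 * n)}

/-- A pair `(x, y)` is a compatible pair of cut points for the alignment. -/
def AuxComp {N a : ℕ} (al mu : Fin a → Fin N) (x y : ℕ) : Prop :=
  ∀ i, ((al i : ℕ) + 1 < x ↔ (mu i : ℕ) + 1 < y)

lemma auxComp_one {N a : ℕ} (al mu : Fin a → Fin N) : AuxComp al mu 1 1 := by
  intro i; omega

lemma auxComp_top {N a : ℕ} (al mu : Fin a → Fin N) : AuxComp al mu (N + 1) (N + 1) := by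
  intro i
  have h1 := (al i).isLt
  have h2 := (mu i).isLt
  omega

/-- One small step: the sum of a compatible pair can be increased by 1 or 2. -/
lemma aux_step1 {N a : ℕ} {al mu : Fin a → Fin N} (hal : StrictMono al) (hmu : StrictMono mu)
    {x y : ℕ} (hc : AuxComp al mu x y) (hx : x ≤ N + 1) (hy : y ≤ N + 1)
    (h : x + y < 2 * (N + 1)) :
    ∃ x' y', AuxComp al mu x' y' ∧ x ≤ x' ∧ y ≤ y' ∧ x' ≤ N + 1 ∧ y' ≤ N + 1 ∧
      x + y + 1 ≤ x' + y' ∧ x' + y' ≤ x + y + 2 := by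
  rcases Nat.lt_or_ge x (N + 1) with hxN | hxN
  · rcases Nat.lt_or_ge y (N + 1) with hyN | hyN
    · by_cases hA : ∀ i, (al i : ℕ) + 1 = x → (mu i : ℕ) + 1 < y
      · refine ⟨x + 1, y, ?_, by omega, le_rfl, hxN, hy, by omega, by omega⟩
        intro i
        have h1 := hc i
        have h2 := hA i
        omega
      · by_cases hB : ∀ i, (mu i : ℕ) + 1 = y → (al i : ℕ) + 1 < x
        · refine ⟨x, y + 1, ?_, le_rfl, by omega, hx, hyN, by omega, by omega⟩
          intro i
          have h1 := hc i
          have h2 := hB i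
          omega
        · push_neg at hA hB
          obtain ⟨i0, hi0a, hi0m⟩ := hA
          obtain ⟨i1, hi1m, hi1a⟩ := hB
          have hle1 : i0 ≤ i1 := hal.le_iff_le.mp (by rw [Fin.le_def]; omega)
          have hle2 : i1 ≤ i0 := hmu.le_iff_le.mp (by rw [Fin.le_def]; omega)
          have h01 : i1 = i0 := le_antisymm hle2 hle1
          subst h01
          refine ⟨x + 1, y + 1, ?_, by omega, by omega, hxN, hyN, by omega, by omega⟩
          intro j
          constructor
          · intro hj
            have h1 : al j ≤ al i1 := by rw [Fin.le_def]; omega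
            have h2 : mu j ≤ mu i1 := hmu.le_iff_le.mpr (hal.le_iff_le.mp h1)
            rw [Fin.le_def] at h2; omega
          · intro hj
            have h1 : mu j ≤ mu i1 := by rw [Fin.le_def]; omega
            have h2 : al j ≤ al i1 := hal.le_iff_le.mpr (hmu.le_iff_le.mp h1)
            rw [Fin.le_def] at h2; omega
    · -- y = N + 1, x < N + 1
      refine ⟨x + 1, y, ?_, by omega, le_rfl, hxN, hy, by omega, by omega⟩
      intro i
      have h1 := hc i
      have h2 := (mu i).isLt
      have h3 := (al i).isLt
      omega
  · -- x = N + 1, y < N + 1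
    have hyN : y < N + 1 := by omega
    refine ⟨x, y + 1, ?_, le_rfl, by omega, hx, hyN, by omega, by omega⟩
    intro i
    have h1 := hc i
    have h2 := (al i).isLt
    have h3 := (mu i).isLt
    omega

/-- For any target `t`, there is a compatible pair above `(x, y)` with sum `t` or `t - 1`. -/
lemma aux_walk {N a : ℕ} {al mu : Fin a → Fin N} (hal : StrictMono al) (hmu : StrictMono mu)
    {x y : ℕ} (hc : AuxComp al mu x y) (hx : x ≤ N + 1) (hy : y ≤ N + 1) :
    ∀ t, x + y ≤ t → t ≤ 2 * (N + 1) →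
    ∃ x' y', AuxComp al mu x' y' ∧ x ≤ x' ∧ y ≤ y' ∧ x' ≤ N + 1 ∧ y' ≤ N + 1 ∧
      t - 1 ≤ x' + y' ∧ x' + y' ≤ t := by
  intro t
  induction t with
  | zero =>
    intro h1 _
    exact ⟨x, y, hc, le_rfl, le_rfl, hx, hy, by omega, by omega⟩
  | succ t ih =>
    intro h1 h2
    rcases Nat.lt_or_ge (x + y) (t + 1) with h | h
    · obtain ⟨x', y', hc', hx', hy', hxN', hyN', hlo, hhi⟩ := ih (by omega) (by omega)
      rcases Nat.lt_or_ge (x' + y') t with hlt | hge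
      · obtain ⟨x'', y'', hc'', hx'', hy'', hxN'', hyN'', hlo2, hhi2⟩ :=
          aux_step1 hal hmu hc' hxN' hyN' (by omega)
        exact ⟨x'', y'', hc'', le_trans hx' hx'', le_trans hy' hy'', hxN'', hyN'',
          by omega, by omega⟩
      · exact ⟨x', y', hc', hx', hy', hxN', hyN', by omega, by omega⟩
    · exact ⟨x, y, hc, le_rfl, le_rfl, hx, hy, by omega, by omega⟩

/-- Greedy chain construction. -/
lemma aux_chain {N a : ℕ} {al mu : Fin a → Fin N} (hal : StrictMono al) (hmu : StrictMono mu)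
    (n : ℕ) (hn : 1 ≤ n) :
    ∀ R x y, x + y + R = 2 * (N + 1) → AuxComp al mu x y → x ≤ N + 1 → y ≤ N + 1 →
    ∃ r, ∃ ν τ : ℕ → ℕ, ν 0 = x ∧ τ 0 = y ∧ ν r = N + 1 ∧ τ r = N + 1 ∧
      (∀ i, ν i ≤ ν (i + 1)) ∧ (∀ i, τ i ≤ τ (i + 1)) ∧
      (∀ i, AuxComp al mu (ν i) (τ i)) ∧
      (∀ j, j + 1 < r → (ν (j + 1) - ν j) + (τ (j + 1) - τ j) = 2 * n - 1 ∨
        (ν (j + 1) - ν j) + (τ (j + 1) - τ j) = 2 * n) ∧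
      (∀ j, j + 1 = r → (ν (j + 1) - ν j) + (τ (j + 1) - τ j) ≤ 2 * n) ∧
      R ≤ 2 * n * r ∧ (r = 0 ∨ (r - 1) * (2 * n - 1) + 1 ≤ R) := by
  intro R
  induction R using Nat.strong_induction_on with
  | _ R ih =>
    intro x y hR hc hx hy
    rcases Nat.eq_zero_or_pos R with h0 | hpos
    · subst h0
      have hx1 : x = N + 1 := by omega
      have hy1 : y = N + 1 := by omega
      exact ⟨0, fun _ => x, fun _ => y, rfl, rfl, hx1, hy1, fun i => le_rfl, fun i => le_rfl,
        fun i => hc, by omega, by omega, by omega, Or.inl rfl⟩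
    rcases Nat.lt_or_ge (2 * n) R with hbig | hsmall
    · -- a full step of total size 2n-1 or 2n
      obtain ⟨x', y', hc', hx', hy', hxN', hyN', hlo, hhi⟩ :=
        aux_walk hal hmu hc hx hy (x + y + 2 * n) (by omega) (by omega)
      obtain ⟨r', ν', τ', h0ν, h0τ, hrν, hrτ, hmν, hmτ, hcomp, hblk, hlast, hub, hlb⟩ :=
        ih (R - (x' + y' - (x + y))) (by omega) x' y' (by omega) hc' hxN' hyN'
      refine ⟨r' + 1, (fun i => match i with | 0 => x | (m + 1) => ν' m),
        (fun i => match i with | 0 => y | (m + 1) => τ' m),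
        rfl, rfl, hrν, hrτ, ?_, ?_, ?_, ?_, ?_, ?_, ?_⟩
      · intro i
        cases i with
        | zero => show x ≤ ν' 0; omega
        | succ m => exact hmν m
      · intro i
        cases i with
        | zero => show y ≤ τ' 0; omega
        | succ m => exact hmτ m
      · intro i
        cases i with
        | zero => exact hc
        | succ m => exact hcomp m
      · intro j hj
        cases j with
        | zero =>
          show (ν' 0 - x) + (τ' 0 - y) = 2 * n - 1 ∨ (ν' 0 - x) + (τ' 0 - y) = 2 * n
          omega
        | succ m => exact hblk m (by omega)
      · intro j hj
        cases j with
        | zero =>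
          show (ν' 0 - x) + (τ' 0 - y) ≤ 2 * n
          omega
        | succ m => exact hlast m (by omega)
      · have h1 : 2 * n * (r' + 1) = 2 * n * r' + 2 * n := by ring
        omega
      · refine Or.inr ?_
        have hr'pos : 1 ≤ r' := by
          rcases Nat.eq_zero_or_pos r' with h | h
          · subst h; simp at hub; omega
          · exact h
        rcases hlb with h | h
        · omega
        · obtain ⟨m, rfl⟩ : ∃ m, r' = m + 1 := ⟨r' - 1, by omega⟩
          have h2 : (m + 1 + 1 - 1) * (2 * n - 1) = m * (2 * n - 1) + (2 * n - 1) := by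
            simp [Nat.succ_mul]
          have h3 : (m + 1 - 1) * (2 * n - 1) = m * (2 * n - 1) := by simp
          rw [h3] at h
          omega
    · -- last block
      refine ⟨1, (fun i => match i with | 0 => x | _ + 1 => N + 1),
        (fun i => match i with | 0 => y | _ + 1 => N + 1),
        rfl, rfl, rfl, rfl, ?_, ?_, ?_, ?_, ?_, by omega, Or.inr (by omega)⟩
      · intro i
        cases i with
        | zero => exact hx
        | succ m => exact le_rfl
      · intro i
        cases i with
        | zero => exact hy
        | succ m => exact le_rfl
      · intro i
        cases i with
        | zero => exact hc
        | succ m => exact auxComp_top al mu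
      · intro j hj; omega
      · intro j hj
        cases j with
        | zero =>
          show (N + 1 - x) + (N + 1 - y) ≤ 2 * n
          omega
        | succ m => omega

/-- Every alignment of two sequences of length `k·n` admits an `r`-partition with
`k ≤ r ≤ ⌈2kn/(2n-1)⌉` whose block sizes satisfy the constraints of `PartSet`. -/
theorem exists_partition_of_alignment (k n : ℕ) (hk : 1 ≤ k) (hn : 1 ≤ n)
    (a : ℕ) (al mu : Fin a → Fin (k * n)) (hal : StrictMono al) (hmu : StrictMono mu) :
    ∃ r : ℕ, k ≤ r ∧ r ≤ Nat.ceil ((2 * (k : ℚ) * n) / (2 * (n : ℚ) - 1)) ∧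
      ∃ p ∈ PartSet r k n,
        ∀ (j : Fin r) (i : Fin a),
          (p.1 j.castSucc ≤ (al i : ℕ) + 1 ∧ (al i : ℕ) + 1 < p.1 j.succ) ↔
          (p.2 j.castSucc ≤ (mu i : ℕ) + 1 ∧ (mu i : ℕ) + 1 < p.2 j.succ) := by
  obtain ⟨r, ν, τ, h0ν, h0τ, hrν, hrτ, hmν, hmτ, hcomp, hblk, hlast, hub, hlb⟩ :=
    aux_chain hal hmu n hn (2 * (k * n)) 1 1 (by ring) (auxComp_one al mu)
      (by omega) (by omega)
  have hge_k : k ≤ r := by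
    have h1 : 2 * n * k ≤ 2 * n * r := by
      have : 2 * n * k = 2 * (k * n) := by ring
      omega
    exact Nat.le_of_mul_le_mul_left h1 (by omega)
  have hr1 : 1 ≤ r := le_trans hk hge_k
  have hlb' : (r - 1) * (2 * n - 1) + 1 ≤ 2 * (k * n) := by
    rcases hlb with h | h
    · omega
    · exact h
  have hceil : r ≤ Nat.ceil ((2 * (k : ℚ) * n) / (2 * (n : ℚ) - 1)) := by
    by_contra hcon
    push_neg at hcon
    set q : ℚ := (2 * (k : ℚ) * n) / (2 * (n : ℚ) - 1) with hqdef
    have hq : q ≤ (Nat.ceil q : ℚ) := Nat.le_ceil q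
    have h2 : (Nat.ceil q : ℕ) ≤ r - 1 := by omega
    have h3 : q ≤ ((r - 1 : ℕ) : ℚ) := le_trans hq (by exact_mod_cast h2)
    have hpos : (0 : ℚ) < 2 * (n : ℚ) - 1 := by
      have : (1 : ℚ) ≤ (n : ℚ) := by exact_mod_cast hn
      linarith
    have h4 : 2 * (k : ℚ) * n ≤ ((r - 1 : ℕ) : ℚ) * (2 * (n : ℚ) - 1) := by
      rw [hqdef, div_le_iff₀ hpos] at h3
      linarith
    have h5 : ((r - 1) * (2 * n - 1) : ℕ) < 2 * (k * n) := by omega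
    have h7 : (((r - 1) * (2 * n - 1) : ℕ) : ℚ) = ((r - 1 : ℕ) : ℚ) * (2 * (n : ℚ) - 1) := by
      have h2n : 1 ≤ 2 * n := by omega
      push_cast [Nat.cast_sub h2n]
      ring
    have h6 : (((r - 1) * (2 * n - 1) : ℕ) : ℚ) < ((2 * (k * n) : ℕ) : ℚ) :=
      Nat.cast_lt.mpr h5
    rw [h7] at h6
    have h8 : ((2 * (k * n) : ℕ) : ℚ) = 2 * (k : ℚ) * n := by push_cast; ring
    rw [h8] at h6
    linarith
  set N := k * n with hN
  refine ⟨r, hge_k, hceil,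
    ⟨fun j : Fin (r + 1) => ν (j : ℕ), fun j : Fin (r + 1) => τ (j : ℕ)⟩,
    ⟨?_, ?_, ?_, ?_, ?_, ?_, ?_⟩, ?_⟩
  · intro i j hij
    exact monotone_nat_of_le_succ hmν hij
  · intro i j hij
    exact monotone_nat_of_le_succ hmτ hij
  · simpa using h0ν
  · simpa using h0τ
  · simpa [Fin.last] using hrν
  · simpa [Fin.last] using hrτ
  · intro j
    constructor
    · intro hj
      simp only [Fin.val_succ, Fin.coe_castSucc, Set.mem_insert_iff, Set.mem_singleton_iff]
      exact hblk (j : ℕ) hj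
    · intro hj
      simp only [Fin.val_succ, Fin.coe_castSucc]
      exact hlast (j : ℕ) hj
  · intro j i
    have c1 := hcomp (j : ℕ) i
    have c2 := hcomp ((j : ℕ) + 1) i
    simp only [Fin.val_succ, Fin.coe_castSucc]
    omega
end

section
/- Let ℬ^r_{k,n} be the set of pairs (ν,τ) of nondecreasing integer sequences of length r+1 with ν_1=τ_1=1, ν_{r+1}=τ_{r+1}=kn+1, satisfying (ν_{j+1}-ν_j)+(τ_{j+1}-τ_j) ∈ {2n-1,2n} for j < r and ≤ 2n for j = r. Then |ℬ^r_{k,n}| ≤ 2^{r-1} · 2n · C(nk+r-1, r-1). -/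
def increments {r : ℕ} (f : Fin (r + 1) → ℕ) (j : Fin r) : ℕ :=
  f j.succ - f j.castSucc

theorem sum_increments {r : ℕ} {f : Fin (r + 1) → ℕ} (hf : Monotone f) :
    ∑ j, increments f j = f (Fin.last r) - f 0 := by
  induction r with
  | zero => simp
  | succ r ih =>
    have hcast : ∑ j : Fin r, increments f j.castSucc = f (Fin.last r).castSucc - f 0 :=
      ih (hf.comp Fin.strictMono_castSucc.monotone)
    have hle₁ : f 0 ≤ f (Fin.last r).castSucc := hf (Fin.zero_le _)
    have hle₂ : f (Fin.last r).castSucc ≤ f (Fin.last (r + 1)) := hf (Fin.le_last _)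
    have hsucc : (Fin.last r).succ = Fin.last (r + 1) := Fin.succ_last r
    rw [Fin.sum_univ_castSucc, hcast, increments, hsucc]
    omega

theorem eq_of_increments_eq {r : ℕ} {f g : Fin (r + 1) → ℕ} (hf : Monotone f) (hg : Monotone g)
    (h0 : f 0 = g 0) (hlast : f (Fin.last r) = g (Fin.last r))
    (h : ∀ j : Fin r, (j : ℕ) + 1 < r → increments f j = increments g j) : f = g := by
  funext i
  induction i using Fin.induction with
  | zero => exact h0
  | succ j ih =>
    rcases (Nat.succ_le_of_lt j.isLt).lt_or_eq with hj | hj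
    · have hf' := hf (Fin.castSucc_le_succ j)
      have hg' := hg (Fin.castSucc_le_succ j)
      have := h j hj
      simp only [increments] at this
      omega
    · rw [show j.succ = Fin.last r from Fin.ext hj, hlast]

theorem choose_mul_two_pow_le {r m n : ℕ} (hn : 1 ≤ n) :
    (r + m - 1).choose m * 2 ^ r ≤ 2 ^ (r - 1) * (2 * n) * (m + r - 1).choose (r - 1) := by
  rcases r with _ | r
  · rcases m with _ | m
    · simp; omega
    · simp
  · have hchoose : (r + 1 + m - 1).choose m = (m + (r + 1) - 1).choose r := by
      rw [show r + 1 + m - 1 = r + m by omega, show m + (r + 1) - 1 = r + m by omega,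
        Nat.choose_symm_add]
    rw [hchoose, pow_succ, Nat.add_sub_cancel]
    calc (m + (r + 1) - 1).choose r * (2 ^ r * 2)
        ≤ (m + (r + 1) - 1).choose r * (2 ^ r * (2 * n)) := by gcongr; omega
      _ = 2 ^ r * (2 * n) * (m + (r + 1) - 1).choose r := by ring

namespace PartSet

variable {r k n : ℕ}

theorem sum_increments_fst (p : PartSet r k n) : ∑ j, increments p.1.1 j = k * n := by
  obtain ⟨hmono, -, h0, -, hlast, -, -⟩ := p.2
  rw [sum_increments hmono, h0, hlast, Nat.add_sub_cancel]

noncomputable def encode (p : PartSet r k n) : Sym (Fin r) (k * n) × (Fin r → Bool) :=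
  ((Sym.equivNatSumOfFintype (Fin r) (k * n)).symm ⟨increments p.1.1, sum_increments_fst p⟩,
    fun j => decide (increments p.1.1 j + increments p.1.2 j = 2 * n))

theorem encode_injective : Function.Injective (encode (r := r) (k := k) (n := n)) := by
  rintro ⟨⟨ν, τ⟩, hν₁, hτ₁, hν₀, hτ₀, hνl, hτl, hblock⟩
    ⟨⟨ν', τ'⟩, hν₁', hτ₁', hν₀', hτ₀', hνl', hτl', hblock'⟩ h
  simp only [encode, Prod.mk.injEq, Equiv.apply_eq_iff_eq, Subtype.mk.injEq] at h
  obtain ⟨hincr, hbits⟩ := h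
  have hν : ν = ν' :=
    eq_of_increments_eq hν₁ hν₁' (hν₀.trans hν₀'.symm) (hνl.trans hνl'.symm)
      fun j _ => congrFun hincr j
  subst hν
  have hτ : τ = τ' := by
    refine eq_of_increments_eq hτ₁ hτ₁' (hτ₀.trans hτ₀'.symm) (hτl.trans hτl'.symm) fun j hj => ?_
    have hbit := congrFun hbits j
    have hs := (hblock j).1 hj
    have hs' := (hblock' j).1 hj
    simp only [decide_eq_decide] at hbit
    simp only [Set.mem_insert_iff, Set.mem_singleton_iff] at hs hs'
    simp only [increments] at hbit ⊢
    omega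
  subst hτ
  rfl

theorem card_le_choose_mul_two_pow :
    Nat.card (PartSet r k n) ≤ (r + k * n - 1).choose (k * n) * 2 ^ r := by
  calc Nat.card (PartSet r k n)
      ≤ Nat.card (Sym (Fin r) (k * n) × (Fin r → Bool)) :=
        Nat.card_le_card_of_injective _ encode_injective
    _ = (r + k * n - 1).choose (k * n) * 2 ^ r := by
        simp [Nat.card_eq_fintype_card, Sym.card_sym_eq_choose]

end PartSet

theorem card_PartSet_le_general (k n r : ℕ) (hn : 1 ≤ n) :
    Nat.card (PartSet r k n) ≤ 2 ^ (r - 1) * (2 * n) * Nat.choose (n * k + r - 1) (r - 1) := by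
  rw [Nat.mul_comm n k]
  exact PartSet.card_le_choose_mul_two_pow.trans (choose_mul_two_pow_le hn)

/-- Cardinality bound: `|ℬ^r_{k,n}| ≤ 2^{r-1} · 2n · C(nk+r-1, r-1)`. -/
theorem card_PartSet_le (k n r : ℕ) (hk : 1 ≤ k) (hn : 1 ≤ n) (hkr : k ≤ r)
    (hr : r ≤ Nat.ceil ((2 * (k : ℚ) * n) / (2 * (n : ℚ) - 1))) :
    Nat.card (PartSet r k n) ≤ 2 ^ (r - 1) * (2 * n) * Nat.choose (n * k + r - 1) (r - 1) :=
  card_PartSet_le_general k n r hn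
end

section
/- For integers n ≥ 2 and k large enough, |ℬ_{k,n}| ≤ exp[(ψ(n) + o(k))·kn] where ψ(n) = (2/(2n-1))·((2n+1)/(2n-1) + ln(2n-1)); more precisely, |ℬ_{k,n}| ≤ (k/(2n-1) + 2) · exp[((ln 4)/(2n-1) + ln(2n)/(nk) + h_e(2/(2n+1))·(2n+1)/(2n-1))·nk]. -/
/-!
Apart from the last one, each block of an element of `ℬ^r_{k,n}` is a pair of increments
`(a, b)` with `a + b ∈ {2n-1, 2n}`, one of `4n+1` choices, and the two sequences are recovered
from these increments and their fixed endpoints; hence `|ℬ^r_{k,n}| ≤ (4n+1)^(r-1)`. At most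
`k/(2n-1) + 2` values of `r` occur, all at most `2kn/(2n-1) + 1`, and the precise bound follows from
`2 log(4n+1) ≤ log 4 + (2n+1) h_e(2/(2n+1))`, which reduces to `(1 + 2/m)^m ≥ 4` for `m = 2n-1`.
The asymptotic bound follows from `log(1 + x) ≤ x`, which gives
`log 4 + (2n+1) h_e(2/(2n+1)) ≤ (2n-1) ψ(n)`.
-/

open Filter

noncomputable def binEnt (q : ℝ) : ℝ := -q * Real.log q - (1 - q) * Real.log (1 - q)

open Finset Real

theorem eq_of_monotone_of_sub_eq_of_last_eq {r : ℕ} {f g : Fin (r + 1) → ℕ} (hf : Monotone f)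
    (hg : Monotone g) (h0 : f 0 = g 0) (hlast : f (Fin.last r) = g (Fin.last r))
    (hsub : ∀ j : Fin r, (j : ℕ) + 1 < r →
      f j.succ - f j.castSucc = g j.succ - g j.castSucc) :
    f = g := by
  have hinit : ∀ i (hi : i < r), f ⟨i, by omega⟩ = g ⟨i, by omega⟩ := by
    intro i
    induction i with
    | zero => exact fun _ => h0
    | succ i ih =>
      intro hi
      have hstep : (⟨i, by omega⟩ : Fin r).castSucc ≤ (⟨i, by omega⟩ : Fin r).succ :=
        Fin.castSucc_le_succ _
      have hd := hsub ⟨i, by omega⟩ hi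
      have hf' := hf hstep
      have hg' := hg hstep
      simp only [Fin.succ_mk, Fin.castSucc_mk] at hd hf' hg'
      have := ih (by omega)
      omega
  funext ⟨i, hi⟩
  rcases Nat.lt_succ_iff_lt_or_eq.mp hi with h | rfl
  · exact hinit i h
  · exact hlast

def blockSizes {r : ℕ} (p : (Fin (r + 1) → ℕ) × (Fin (r + 1) → ℕ)) (j : Fin (r - 1)) :
    ℕ × ℕ :=
  (p.1 (Fin.castLE (r.sub_le 1) j).succ - p.1 (Fin.castLE (r.sub_le 1) j).castSucc,
    p.2 (Fin.castLE (r.sub_le 1) j).succ - p.2 (Fin.castLE (r.sub_le 1) j).castSucc)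

theorem card_partSet_le {r k n : ℕ} (hn : 1 ≤ n) :
    Nat.card (PartSet r k n) ≤ (4 * n + 1) ^ (r - 1) := by
  set S := antidiagonal (2 * n - 1) ∪ antidiagonal (2 * n)
  have hS : #S ≤ 4 * n + 1 :=
    (card_union_le _ _).trans (by simp only [Nat.card_antidiagonal]; omega)
  have hmaps : ∀ p ∈ PartSet r k n,
      blockSizes p ∈
        (Fintype.piFinset fun _ : Fin (r - 1) => S : Set (Fin (r - 1) → ℕ × ℕ)) := by
    rintro p ⟨-, -, -, -, -, -, hblk⟩
    refine mem_coe.mpr (Fintype.mem_piFinset.mpr fun j => ?_)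
    have hj := (hblk (Fin.castLE (r.sub_le 1) j)).1 (by simp only [Fin.val_castLE]; omega)
    simpa only [S, blockSizes, mem_union, HasAntidiagonal.mem_antidiagonal, Set.mem_insert_iff,
      Set.mem_singleton_iff] using hj
  have hinj : Set.InjOn blockSizes (PartSet r k n) := by
    rintro p ⟨hp1, hp2, hp10, hp20, hp1l, hp2l, -⟩ q ⟨hq1, hq2, hq10, hq20, hq1l, hq2l, -⟩
      hpq
    have hsub : ∀ (j : Fin r) (hj : (j : ℕ) + 1 < r),
        blockSizes p ⟨j, by omega⟩ = blockSizes q ⟨j, by omega⟩ := fun j _ => congrFun hpq _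
    simp only [blockSizes, Prod.mk.injEq, Fin.castLE_mk, Fin.eta] at hsub
    exact Prod.ext
      (eq_of_monotone_of_sub_eq_of_last_eq hp1 hq1 (hp10.trans hq10.symm)
        (hp1l.trans hq1l.symm) fun j hj => (hsub j hj).1)
      (eq_of_monotone_of_sub_eq_of_last_eq hp2 hq2 (hp20.trans hq20.symm)
        (hp2l.trans hq2l.symm) fun j hj => (hsub j hj).2)
  calc Nat.card (PartSet r k n) = (PartSet r k n).ncard := Nat.card_coe_set_eq _
    _ ≤ (Fintype.piFinset fun _ : Fin (r - 1) => S : Set (Fin (r - 1) → ℕ × ℕ)).ncard :=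
      Set.ncard_le_ncard_of_injOn _ hmaps hinj (finite_toSet _)
    _ = #S ^ (r - 1) := by
      rw [Set.ncard_coe_finset, Fintype.card_piFinset, prod_const, card_univ, Fintype.card_fin]
    _ ≤ (4 * n + 1) ^ (r - 1) := Nat.pow_le_pow_left hS _

theorem Nat.cast_sub_le_of_le_add {R : Type*} [Ring R] [PartialOrder R] [IsOrderedRing R]
    {a b : ℕ} {x : R} (h : (a : R) ≤ x + b) (hx : 0 ≤ x) : ((a - b : ℕ) : R) ≤ x := by
  rcases le_total b a with hba | hab
  · rw [Nat.cast_sub hba]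
    exact sub_le_iff_le_add.mpr h
  · rw [Nat.sub_eq_zero_of_le hab, Nat.cast_zero]
    exact hx

theorem one_add_mul_add_choose_two_mul_sq_le_pow {u : ℝ} (hu : 0 ≤ u) (m : ℕ) :
    1 + m * u + m.choose 2 * u ^ 2 ≤ (1 + u) ^ m := by
  induction m with
  | zero => simp
  | succ m ih =>
    have hstep := mul_le_mul_of_nonneg_right ih (by linarith : 0 ≤ 1 + u)
    have hcube : 0 ≤ (m.choose 2 : ℝ) * u ^ 3 := by positivity
    rw [Nat.choose_succ_succ', Nat.choose_one_right, pow_succ (1 + u) m]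
    push_cast
    nlinarith

theorem log_four_le_mul_log_one_add_two_div {m : ℕ} (hm : 2 ≤ m) :
    log 4 ≤ m * log (1 + 2 / m) := by
  have hm' : (2 : ℝ) ≤ m := by exact_mod_cast hm
  have hfour : (4 : ℝ) ≤ (1 + 2 / m) ^ m := by
    refine le_trans ?_ (one_add_mul_add_choose_two_mul_sq_le_pow (by positivity) m)
    rw [Nat.cast_choose_two, div_pow, ← sub_nonneg]
    have : 0 < (m : ℝ) := by linarith
    field_simp
    nlinarith
  rw [← log_pow]
  exact log_le_log (by norm_num) hfour

theorem binEnt_div_mul {a M : ℝ} (ha : 0 < a) (haM : a < M) :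
    binEnt (a / M) * M = a * log (M / a) + (M - a) * log (M / (M - a)) := by
  have hM : 0 < M := ha.trans haM
  have hMa : 0 < M - a := sub_pos.mpr haM
  have hsub : 1 - a / M = (M - a) / M := by field_simp
  rw [binEnt, hsub, log_div ha.ne' hM.ne', log_div hMa.ne' hM.ne', log_div hM.ne' ha.ne',
    log_div hM.ne' hMa.ne']
  field_simp
  ring

theorem two_mul_log_le_log_four_add_binEnt {n : ℕ} (hn : 2 ≤ n) :
    2 * log (4 * n + 1) ≤ log 4 + binEnt (2 / (2 * n + 1)) * (2 * n + 1) := by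
  have hn' : (2 : ℝ) ≤ n := by exact_mod_cast hn
  have hm : ((2 * n - 1 : ℕ) : ℝ) = 2 * n - 1 := by
    rw [Nat.cast_sub (by omega)]
    push_cast
    ring
  have hm0 : (2 : ℝ) * n - 1 ≠ 0 := by linarith
  have hbern := log_four_le_mul_log_one_add_two_div (m := 2 * n - 1) (by omega)
  rw [hm, show 1 + 2 / (2 * (n : ℝ) - 1) = (2 * n + 1) / (2 * n - 1) by field_simp; ring] at hbern
  have hlog4 : log 4 = 2 * log 2 := by
    rw [show (4 : ℝ) = 2 ^ 2 by norm_num, log_pow, Nat.cast_ofNat]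
  have hmono : log (4 * n + 1) ≤ log 2 + log (2 * n + 1) := by
    rw [← log_mul (by norm_num) (by positivity)]
    exact log_le_log (by positivity) (by linarith)
  rw [binEnt_div_mul (by norm_num) (by linarith), log_div (by positivity) (by norm_num),
    show (2 : ℝ) * n + 1 - 2 = 2 * n - 1 by ring]
  linarith

theorem log_four_add_binEnt_div_le {N : ℝ} (hN : 1 / 2 < N) :
    (log 4 + binEnt (2 / (2 * N + 1)) * (2 * N + 1)) / (2 * N - 1) ≤
      2 / (2 * N - 1) * ((2 * N + 1) / (2 * N - 1) + log (2 * N - 1)) := by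
  have hm : 0 < 2 * N - 1 := by linarith
  have hp : 0 < 2 * N + 1 := by linarith
  have hratio : log ((2 * N + 1) / (2 * N - 1)) ≤ 2 / (2 * N - 1) := by
    have h := log_le_sub_one_of_pos (div_pos hp hm)
    rwa [show (2 * N + 1) / (2 * N - 1) - 1 = 2 / (2 * N - 1) by field_simp; ring] at h
  have hlog4 : log 4 = 2 * log 2 := by
    rw [show (4 : ℝ) = 2 ^ 2 by norm_num, log_pow, Nat.cast_ofNat]
  have hpsi : 2 / (2 * N - 1) * ((2 * N + 1) / (2 * N - 1) + log (2 * N - 1)) * (2 * N - 1)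
      = (2 * N + 1) * (2 / (2 * N - 1)) + 2 * log (2 * N - 1) := by
    field_simp
  rw [div_le_iff₀ hm, hpsi, binEnt_div_mul (by norm_num) (by linarith),
    log_div hp.ne' (by norm_num), show 2 * N + 1 - 2 = 2 * N - 1 by ring]
  have := mul_le_mul_of_nonneg_left hratio hp.le
  have hL := log_div hp.ne' hm.ne'
  linarith

theorem tendsto_log_const_mul_div_atTop {c : ℝ} (hc : 0 < c) :
    Tendsto (fun x : ℝ => log (c * x) / x) atTop (nhds 0) := by
  have h := (isLittleO_log_id_atTop.tendsto_div_nhds_zero.comp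
    (tendsto_id.const_mul_atTop hc)).const_mul c
  rw [mul_zero] at h
  refine h.congr fun x => ?_
  simp only [Function.comp_apply, id]
  rcases eq_or_ne x 0 with rfl | hx
  · simp
  · field_simp

theorem bound_exponent_eq {k n : ℕ} (hk : k ≠ 0) (hn : n ≠ 0) :
    (log 4 / (2 * n - 1) + log (2 * n) / (n * k)
        + binEnt (2 / (2 * n + 1)) * (2 * n + 1) / (2 * n - 1)) * n * k
      = (log 4 + binEnt (2 / (2 * n + 1)) * (2 * n + 1)) / (2 * n - 1) * (k * n)
        + log (2 * n) := by
  field_simp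
  ring

noncomputable def cardB (k n : ℕ) : ℕ :=
  ∑ r ∈ Icc k ⌈(2 * (k : ℚ) * n) / (2 * (n : ℚ) - 1)⌉₊, Nat.card (PartSet r k n)

theorem cardB_le {k n : ℕ} (hn : 2 ≤ n) (hk : 1 ≤ k) :
    (cardB k n : ℝ) ≤ (k / (2 * n - 1) + 2) *
      exp ((log 4 / (2 * n - 1) + log (2 * n) / (n * k)
        + binEnt (2 / (2 * n + 1)) * (2 * n + 1) / (2 * n - 1)) * n * k) := by
  set R := ⌈(2 * (k : ℚ) * n) / (2 * (n : ℚ) - 1)⌉₊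
  have hn' : (2 : ℝ) ≤ n := by exact_mod_cast hn
  have hm : 0 < 2 * (n : ℝ) - 1 := by linarith
  have hR : (R : ℝ) ≤ 2 * k * n / (2 * n - 1) + 1 := by
    have hnq : (2 : ℚ) ≤ n := by exact_mod_cast hn
    have hq : (0 : ℚ) ≤ 2 * k * n / (2 * n - 1) := div_nonneg (by positivity) (by linarith)
    have h := (Rat.cast_le (K := ℝ)).mpr (Nat.ceil_lt_add_one hq).le
    push_cast at h
    exact h
  have hsum : cardB k n ≤ #(Icc k R) * (4 * n + 1) ^ (R - 1) := by
    refine (sum_le_card_nsmul _ _ _ fun r hr => ?_).trans_eq (smul_eq_mul _ _)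
    exact (card_partSet_le (by omega)).trans
      (Nat.pow_le_pow_right (by omega) (by have := (mem_Icc.mp hr).2; omega))
  have hcard : (#(Icc k R) : ℝ) ≤ k / (2 * n - 1) + 2 := by
    rw [Nat.card_Icc]
    refine Nat.cast_sub_le_of_le_add ?_ (by positivity)
    have : (2 * k * n / (2 * n - 1) : ℝ) = k / (2 * n - 1) + k := by field_simp; ring
    push_cast
    linarith
  have hpow : (((4 * n + 1) ^ (R - 1) : ℕ) : ℝ) ≤
      exp ((log 4 / (2 * n - 1) + log (2 * n) / (n * k)
        + binEnt (2 / (2 * n + 1)) * (2 * n + 1) / (2 * n - 1)) * n * k) := by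
    have hR1 : ((R - 1 : ℕ) : ℝ) ≤ 2 * k * n / (2 * n - 1) :=
      Nat.cast_sub_le_of_le_add (by push_cast; linarith) (by positivity)
    rw [bound_exponent_eq (by omega) (by omega), Nat.cast_pow,
      ← exp_log (by positivity : (0 : ℝ) < ((4 * n + 1 : ℕ) : ℝ)),
      ← exp_nat_mul, exp_le_exp]
    push_cast
    calc ((R - 1 : ℕ) : ℝ) * log (4 * n + 1)
        ≤ 2 * k * n / (2 * n - 1) * log (4 * n + 1) :=
          mul_le_mul_of_nonneg_right hR1 (log_nonneg (by linarith))
      _ = 2 * log (4 * n + 1) / (2 * n - 1) * (k * n) := by ring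
      _ ≤ (log 4 + binEnt (2 / (2 * n + 1)) * (2 * n + 1)) / (2 * n - 1) * (k * n) := by
          gcongr
          exact two_mul_log_le_log_four_add_binEnt hn
      _ ≤ _ := le_add_of_nonneg_right (log_nonneg (by linarith))
  calc (cardB k n : ℝ) ≤ (#(Icc k R) : ℝ) * (((4 * n + 1) ^ (R - 1) : ℕ) : ℝ) := by
        exact_mod_cast hsum
    _ ≤ _ := mul_le_mul hcard hpow (by positivity) (by positivity)

theorem cardB_bound_le_exp {k n : ℕ} (hn : 2 ≤ n) (hk : 1 ≤ k) :
    ((k : ℝ) / (2 * n - 1) + 2) *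
        exp ((log 4 / (2 * n - 1) + log (2 * n) / (n * k)
          + binEnt (2 / (2 * n + 1)) * (2 * n + 1) / (2 * n - 1)) * n * k) ≤
      exp ((2 / (2 * n - 1) * ((2 * n + 1) / (2 * n - 1) + log (2 * n - 1))
        + log (6 * (n * k)) / (n * k)) * k * n) := by
  have hn' : (2 : ℝ) ≤ n := by exact_mod_cast hn
  have hk' : (1 : ℝ) ≤ k := by exact_mod_cast hk
  have hm : 0 < 2 * (n : ℝ) - 1 := by linarith
  have hkm : (k : ℝ) / (2 * n - 1) ≤ k := div_le_self (by linarith) (by linarith)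
  have hrate := mul_le_mul_of_nonneg_right (log_four_add_binEnt_div_le (N := n) (by linarith))
    (by positivity : (0 : ℝ) ≤ k * n)
  have hlog : log ((k / (2 * n - 1) + 2) * (2 * n)) ≤ log (6 * (n * k)) :=
    log_le_log (by positivity) (by nlinarith)
  rw [log_mul (by positivity) (by positivity)] at hlog
  rw [← exp_log (by positivity : (0 : ℝ) < k / (2 * n - 1) + 2), ← exp_add, exp_le_exp]
  have hrhs : (2 / (2 * n - 1) * ((2 * n + 1) / (2 * n - 1) + log (2 * n - 1))
        + log (6 * (n * k)) / (n * k)) * k * n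
      = 2 / (2 * n - 1) * ((2 * n + 1) / (2 * n - 1) + log (2 * n - 1)) * (k * n)
        + log (6 * (n * k)) := by
    field_simp
  rw [bound_exponent_eq (by omega) (by omega), hrhs]
  linarith

/-- Cardinality bound for `ℬ_{k,n} = ∪_r ℬ^r_{k,n}` (a disjoint union over `r`, so
its cardinality is the sum of the cardinalities): asymptotically
`|ℬ_{k,n}| ≤ exp[(ψ(n) + o(k))·kn]` with `ψ(n) = (2/(2n-1))((2n+1)/(2n-1) + ln(2n-1))`,
and precisely
`|ℬ_{k,n}| ≤ (k/(2n-1)+2) · exp[((ln 4)/(2n-1) + ln(2n)/(nk) + h_e(2/(2n+1))(2n+1)/(2n-1))·nk]`. -/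
theorem card_B_le (n : ℕ) (hn : 2 ≤ n) :
    (∃ e : ℕ → ℝ, Tendsto e atTop (nhds 0) ∧
      ∀ k : ℕ, 1 ≤ k →
        ((∑ r ∈ Finset.Icc k (Nat.ceil ((2 * (k : ℚ) * n) / (2 * (n : ℚ) - 1))),
            Nat.card (PartSet r k n) : ℕ) : ℝ) ≤
          Real.exp (((2 / (2 * (n : ℝ) - 1)) *
            ((2 * (n : ℝ) + 1) / (2 * (n : ℝ) - 1) + Real.log (2 * (n : ℝ) - 1)) + e k)
              * k * n)) ∧
    (∀ k : ℕ, 1 ≤ k →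
      ((∑ r ∈ Finset.Icc k (Nat.ceil ((2 * (k : ℚ) * n) / (2 * (n : ℚ) - 1))),
          Nat.card (PartSet r k n) : ℕ) : ℝ) ≤
        ((k : ℝ) / (2 * (n : ℝ) - 1) + 2) *
          Real.exp (((Real.log 4) / (2 * (n : ℝ) - 1) + Real.log (2 * (n : ℝ)) / ((n : ℝ) * k)
            + binEnt (2 / (2 * (n : ℝ) + 1)) * (2 * (n : ℝ) + 1) / (2 * (n : ℝ) - 1))
              * n * k)) := by
  have hn' : (0 : ℝ) < n := Nat.cast_pos.mpr (by omega)
  have he : Tendsto (fun k : ℕ => log (6 * (n * k)) / (n * k)) atTop (nhds 0) :=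
    (tendsto_log_const_mul_div_atTop (by norm_num)).comp
      (tendsto_natCast_atTop_atTop.const_mul_atTop hn')
  exact ⟨⟨_, he, fun k hk => (cardB_le hn hk).trans (cardB_bound_le_exp hn hk)⟩,
    fun k hk => cardB_le hn hk⟩
end

section
/- If X, Y are sequences of length n - u and n + u respectively (|u| ≤ n) drawn i.i.d. from the same distribution on a finite alphabet, then E[L(X_1,...,X_{n-u}; Y_1,...,Y_{n+u})] ≤ (1/2)·E[L(X_1,...,X_{2n}; Y_1,...,Y_{2n})]. -/
open MeasureTheory ProbabilityTheory Real Filter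

/-- Optimal alignment score of two sequences of the same length `m`,
with pairwise score `S` and gap price `δ` (a gap is a pair of indels). -/
noncomputable def alignScore {𝔸 : Type*} (S : 𝔸 → 𝔸 → ℝ) (δ : ℝ) {m : ℕ}
    (x y : Fin m → 𝔸) : ℝ :=
  sSup {s : ℝ | ∃ (k : ℕ) (al : Fin k → Fin m) (mu : Fin k → Fin m),
    StrictMono al ∧ StrictMono mu ∧
    s = (∑ i, S (x (al i)) (y (mu i))) + δ * ((m : ℝ) - (k : ℝ))}

/-- Optimal alignment score for sequences of possibly different lengths `p`, `q`;
the gap count is `((p-k)+(q-k))/2`. -/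
noncomputable def alignScore2 {𝔸 : Type*} (S : 𝔸 → 𝔸 → ℝ) (δ : ℝ) {p q : ℕ}
    (x : Fin p → 𝔸) (y : Fin q → 𝔸) : ℝ :=
  sSup {s : ℝ | ∃ (k : ℕ) (al : Fin k → Fin p) (mu : Fin k → Fin q),
    StrictMono al ∧ StrictMono mu ∧
    s = (∑ i, S (x (al i)) (y (mu i))) +
      δ * ((((p : ℝ) - (k : ℝ)) + ((q : ℝ) - (k : ℝ))) / 2)}

/-! Splitting `X` at `p` and `Y` at `q`, an alignment of `X[0,p)` with `Y[0,q)` followed by one of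
`X[p,2n)` with `Y[q,2n)` is an alignment of `X` with `Y`, so the two optimal scores add up to at
most `L(X; Y)`. The second pair has lengths `q, p`; since `S` is symmetric its score is that of
`(Y[q,2n), X[p,2n))`, which consists of fresh i.i.d. letters in the same pattern of lengths as
`(X[0,p), Y[0,q))` and therefore has the same expected score. -/

section Alignment

variable {𝔸 : Type*} (S : 𝔸 → 𝔸 → ℝ) (δ : ℝ)

theorem alignScore_eq_alignScore2 {m : ℕ} (x y : Fin m → 𝔸) :
    alignScore S δ x y = alignScore2 S δ x y := by
  have hgap (k : ℕ) : ((m : ℝ) - k + (m - k)) / 2 = m - k := by ring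
  simp only [alignScore, alignScore2, hgap]

theorem alignScore2_comm (hS : ∀ a b, S a b = S b a) {p q : ℕ} (x : Fin p → 𝔸)
    (y : Fin q → 𝔸) : alignScore2 S δ x y = alignScore2 S δ y x := by
  unfold alignScore2
  congr 1
  ext s
  constructor <;> rintro ⟨k, al, mu, hal, hmu, rfl⟩ <;>
    exact ⟨k, mu, al, hmu, hal, by simp only [hS]; ring⟩

theorem alignScore2_comp_cast {p p' q q' : ℕ} (hp : p = p') (hq : q = q') (x : Fin p' → 𝔸)
    (y : Fin q' → 𝔸) :
    alignScore2 S δ (x ∘ Fin.cast hp) (y ∘ Fin.cast hq) = alignScore2 S δ x y := by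
  subst hp hq
  rfl

theorem bddAbove_alignScores [Finite 𝔸] {p q : ℕ} (x : Fin p → 𝔸) (y : Fin q → 𝔸) :
    BddAbove {s : ℝ | ∃ (k : ℕ) (al : Fin k → Fin p) (mu : Fin k → Fin q),
      StrictMono al ∧ StrictMono mu ∧
      s = (∑ i, S (x (al i)) (y (mu i))) +
        δ * ((((p : ℝ) - (k : ℝ)) + ((q : ℝ) - (k : ℝ))) / 2)} := by
  obtain ⟨B, hB⟩ := (Set.finite_range fun ab : 𝔸 × 𝔸 => S ab.1 ab.2).bddAbove
  refine ⟨p * max B 0 + |δ| * (p + q), ?_⟩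
  rintro _ ⟨k, al, mu, hal, hmu, rfl⟩
  have hkp : (k : ℝ) ≤ p := by exact_mod_cast Fin.le_of_embedding ⟨al, hal.injective⟩
  have hkq : (k : ℝ) ≤ q := by exact_mod_cast Fin.le_of_embedding ⟨mu, hmu.injective⟩
  have hsum : ∑ i, S (x (al i)) (y (mu i)) ≤ k * max B 0 := by
    calc ∑ i, S (x (al i)) (y (mu i)) ≤ ∑ _i : Fin k, max B 0 :=
          Finset.sum_le_sum fun i _ => (hB ⟨(x (al i), y (mu i)), rfl⟩).trans (le_max_left _ _)
      _ = k * max B 0 := by simp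
  have hgap : δ * (((p - k) + (q - k)) / 2) ≤ |δ| * (p + q) := by
    have : 0 ≤ (k : ℝ) := k.cast_nonneg
    calc δ * (((p - k) + (q - k)) / 2) ≤ |δ| * (((p - k) + (q - k)) / 2) :=
          mul_le_mul_of_nonneg_right (le_abs_self δ) (by linarith)
      _ ≤ |δ| * (p + q) := by gcongr; linarith
  nlinarith [le_max_right B 0]

variable {S δ} in
theorem le_alignScore2 [Finite 𝔸] {p q k : ℕ} {x : Fin p → 𝔸} {y : Fin q → 𝔸}
    {al : Fin k → Fin p} {mu : Fin k → Fin q} (hal : StrictMono al) (hmu : StrictMono mu) :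
    (∑ i, S (x (al i)) (y (mu i))) + δ * ((((p : ℝ) - (k : ℝ)) + ((q : ℝ) - (k : ℝ))) / 2) ≤
      alignScore2 S δ x y :=
  le_csSup (bddAbove_alignScores S δ x y) ⟨k, al, mu, hal, hmu, rfl⟩

theorem alignScore2_le {p q : ℕ} {x : Fin p → 𝔸} {y : Fin q → 𝔸} {c : ℝ}
    (h : ∀ (k : ℕ) (al : Fin k → Fin p) (mu : Fin k → Fin q), StrictMono al → StrictMono mu →
      (∑ i, S (x (al i)) (y (mu i))) + δ * ((((p : ℝ) - (k : ℝ)) + ((q : ℝ) - (k : ℝ))) / 2) ≤ c) :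
    alignScore2 S δ x y ≤ c :=
  csSup_le ⟨_, 0, Fin.elim0, Fin.elim0, fun i => i.elim0, fun i => i.elim0, rfl⟩
    fun _ ⟨k, al, mu, hal, hmu, hs⟩ => hs ▸ h k al mu hal hmu

theorem Fin.strictMono_append_castAdd_natAdd {k₁ k₂ n₁ n₂ : ℕ} {a : Fin k₁ → Fin n₁}
    {b : Fin k₂ → Fin n₂} (ha : StrictMono a) (hb : StrictMono b) :
    StrictMono (Fin.append (Fin.castAdd n₂ ∘ a) (Fin.natAdd n₁ ∘ b)) := by
  intro i j hij
  induction i using Fin.addCases with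
  | left i =>
    induction j using Fin.addCases with
    | left j =>
      simp only [Fin.append_left, Function.comp_apply]
      exact ha hij
    | right j => simpa [Fin.lt_def] using Nat.lt_add_right _ (a i).isLt
  | right i =>
    induction j using Fin.addCases with
    | left j =>
      simp only [Fin.lt_def, Fin.val_natAdd, Fin.val_castAdd] at hij
      omega
    | right j => simpa using hb (by simpa using hij)

theorem alignScore2_castAdd_add_natAdd_le [Finite 𝔸] {p₁ p₂ q₁ q₂ : ℕ} (x : Fin (p₁ + p₂) → 𝔸)
    (y : Fin (q₁ + q₂) → 𝔸) :
    alignScore2 S δ (x ∘ Fin.castAdd p₂) (y ∘ Fin.castAdd q₂) +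
        alignScore2 S δ (x ∘ Fin.natAdd p₁) (y ∘ Fin.natAdd q₁) ≤ alignScore2 S δ x y := by
  rw [← le_sub_iff_add_le]
  refine alignScore2_le S δ fun k₁ al₁ mu₁ hal₁ hmu₁ => ?_
  rw [le_sub_comm]
  refine alignScore2_le S δ fun k₂ al₂ mu₂ hal₂ hmu₂ => ?_
  rw [le_sub_iff_add_le']
  refine (le_of_eq ?_).trans (le_alignScore2 (Fin.strictMono_append_castAdd_natAdd hal₁ hal₂)
    (Fin.strictMono_append_castAdd_natAdd hmu₁ hmu₂))
  simp only [Fin.sum_univ_add, Fin.append_left, Fin.append_right, Function.comp_apply]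
  push_cast
  ring

end Alignment

section Exchangeability

variable {Ω ι κ 𝔸 : Type*} [MeasurableSpace Ω] [MeasurableSpace 𝔸] {P : Measure Ω}

theorem integrable_comp₂_of_finite {β γ : Type*} [Finite β] [MeasurableSpace β]
    [MeasurableSingletonClass β] [Finite γ] [MeasurableSpace γ] [MeasurableSingletonClass γ]
    [IsFiniteMeasure P] {x : Ω → β} {y : Ω → γ} (hx : Measurable x) (hy : Measurable y)
    (L : β → γ → ℝ) : Integrable (fun ω => L (x ω) (y ω)) P :=
  (Integrable.of_finite (f := Function.uncurry L)).comp_measurable (hx.prodMk hy)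

variable {Z : ι → Ω → 𝔸}

theorem identDistrib_comp_of_injective [Fintype κ] (hZ : ∀ i, Measurable (Z i))
    (hindep : iIndepFun Z P) (hid : ∀ i j, P.map (Z i) = P.map (Z j))
    {e e' : κ → ι} (he : e.Injective) (he' : e'.Injective) :
    IdentDistrib (fun ω k => Z (e k) ω) (fun ω k => Z (e' k) ω) P P where
  aemeasurable_fst := (measurable_pi_lambda _ fun k => hZ (e k)).aemeasurable
  aemeasurable_snd := (measurable_pi_lambda _ fun k => hZ (e' k)).aemeasurable
  map_eq := by
    rw [(hindep.precomp he).map_fun_eq_pi_map fun k => (hZ (e k)).aemeasurable,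
      (hindep.precomp he').map_fun_eq_pi_map fun k => (hZ (e' k)).aemeasurable]
    exact congrArg Measure.pi (funext fun k => hid (e k) (e' k))

theorem integral_comp_eq_of_injective [Fintype κ] [Countable 𝔸] [MeasurableSingletonClass 𝔸]
    (hZ : ∀ i, Measurable (Z i)) (hindep : iIndepFun Z P)
    (hid : ∀ i j, P.map (Z i) = P.map (Z j)) {e e' : κ → ι} (he : e.Injective)
    (he' : e'.Injective) (G : (κ → 𝔸) → ℝ) :
    ∫ ω, G (fun k => Z (e k) ω) ∂P = ∫ ω, G (fun k => Z (e' k) ω) ∂P :=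
  ((identDistrib_comp_of_injective hZ hindep hid he he').comp .of_discrete).integral_eq

end Exchangeability

/-- We write `p = n - u`, `q = n + u`, so `p + q = 2n`. -/
theorem expected_unbalanced_score_le_half_general
    {𝔸 : Type*} [Fintype 𝔸] [MeasurableSpace 𝔸] [MeasurableSingletonClass 𝔸]
    {Ω : Type*} [MeasurableSpace Ω] (Pr : Measure Ω) [IsProbabilityMeasure Pr]
    (Z : ℕ ⊕ ℕ → Ω → 𝔸) (hmeas : ∀ i, Measurable (Z i))
    (hindep : iIndepFun Z Pr)
    (hid : ∀ i j, Measure.map (Z i) Pr = Measure.map (Z j) Pr)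
    (S : 𝔸 → 𝔸 → ℝ) (hsymm : ∀ a b, S a b = S b a) (δ : ℝ)
    (n p q : ℕ) (hpq : p + q = 2 * n) :
    (∫ ω, alignScore2 S δ (fun i : Fin p => Z (Sum.inl ((i : ℕ) + 1)) ω)
        (fun i : Fin q => Z (Sum.inr ((i : ℕ) + 1)) ω) ∂Pr) ≤
      (1 / 2) *
        ∫ ω, alignScore S δ (fun i : Fin (2 * n) => Z (Sum.inl ((i : ℕ) + 1)) ω)
          (fun i : Fin (2 * n) => Z (Sum.inr ((i : ℕ) + 1)) ω) ∂Pr := by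
  set X : Ω → Fin (2 * n) → 𝔸 := fun ω i => Z (.inl (i + 1)) ω
  set Y : Ω → Fin (2 * n) → 𝔸 := fun ω i => Z (.inr (i + 1)) ω
  set X₁ : Ω → Fin p → 𝔸 := fun ω i => Z (.inl (i + 1)) ω
  set Y₁ : Ω → Fin q → 𝔸 := fun ω j => Z (.inr (j + 1)) ω
  set X₂ : Ω → Fin q → 𝔸 := fun ω j => Z (.inl (p + j + 1)) ω
  set Y₂ : Ω → Fin p → 𝔸 := fun ω i => Z (.inr (q + i + 1)) ω
  have hsuper (ω : Ω) :
      alignScore2 S δ (X₁ ω) (Y₁ ω) + alignScore2 S δ (Y₂ ω) (X₂ ω) ≤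
        alignScore S δ (X ω) (Y ω) := by
    rw [alignScore_eq_alignScore2, ← alignScore2_comp_cast S δ hpq (by omega : q + p = 2 * n),
      alignScore2_comm S δ hsymm (Y₂ ω)]
    exact alignScore2_castAdd_add_natAdd_le S δ (X ω ∘ Fin.cast hpq) (Y ω ∘ Fin.cast _)
  have hexch : ∫ ω, alignScore2 S δ (Y₂ ω) (X₂ ω) ∂Pr = ∫ ω, alignScore2 S δ (X₁ ω) (Y₁ ω) ∂Pr :=
    integral_comp_eq_of_injective hmeas hindep hid
      (e := Sum.elim (fun i : Fin p => .inr (q + i + 1)) (fun j : Fin q => .inl (p + j + 1)))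
      (e' := Sum.elim (fun i : Fin p => .inl (i + 1)) (fun j : Fin q => .inr (j + 1)))
      (.sumElim (fun i j h => Fin.ext (by simpa using h)) (fun i j h => Fin.ext (by simpa using h))
        fun _ _ => Sum.inr_ne_inl)
      (.sumElim (fun i j h => Fin.ext (by simpa using h)) (fun i j h => Fin.ext (by simpa using h))
        fun _ _ => Sum.inl_ne_inr)
      fun v => alignScore2 S δ (v ∘ .inl) (v ∘ .inr)
  have hint {a b : ℕ} (f : Fin a → ℕ ⊕ ℕ) (g : Fin b → ℕ ⊕ ℕ) (L : (Fin a → 𝔸) → (Fin b → 𝔸) → ℝ) :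
      Integrable (fun ω => L (fun i => Z (f i) ω) (fun j => Z (g j) ω)) Pr :=
    integrable_comp₂_of_finite (measurable_pi_lambda _ fun i => hmeas (f i))
      (measurable_pi_lambda _ fun j => hmeas (g j)) L
  calc ∫ ω, alignScore2 S δ (X₁ ω) (Y₁ ω) ∂Pr
      = (1 / 2) * ∫ ω, alignScore2 S δ (X₁ ω) (Y₁ ω) + alignScore2 S δ (Y₂ ω) (X₂ ω) ∂Pr := by
        rw [integral_add (hint _ _ _) (hint _ _ _), hexch]
        ring
    _ ≤ (1 / 2) * ∫ ω, alignScore S δ (X ω) (Y ω) ∂Pr := by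
        gcongr
        exacts [(hint _ _ _).add (hint _ _ _), hint _ _ _, hsuper]

/-- For i.i.d. sequences, `E[L(X_1..X_{n-u}; Y_1..Y_{n+u})] ≤ (1/2)E[L_{2n}]`;
we write `p = n - u`, `q = n + u`, so `p + q = 2n`. -/
theorem expected_unbalanced_score_le_half
    {𝔸 : Type*} [Fintype 𝔸] [Nonempty 𝔸] [MeasurableSpace 𝔸] [MeasurableSingletonClass 𝔸]
    {Ω : Type*} [MeasurableSpace Ω] (Pr : Measure Ω) [IsProbabilityMeasure Pr]
    (Z : ℕ ⊕ ℕ → Ω → 𝔸) (hmeas : ∀ i, Measurable (Z i))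
    (hindep : iIndepFun Z Pr)
    (hid : ∀ i j, Measure.map (Z i) Pr = Measure.map (Z j) Pr)
    (S : 𝔸 → 𝔸 → ℝ) (hsymm : ∀ a b, S a b = S b a) (hpos : ∀ a b, 0 ≤ S a b) (δ : ℝ)
    (n p q : ℕ) (hn : 1 ≤ n) (hpq : p + q = 2 * n) :
    (∫ ω, alignScore2 S δ (fun i : Fin p => Z (Sum.inl ((i : ℕ) + 1)) ω)
        (fun i : Fin q => Z (Sum.inr ((i : ℕ) + 1)) ω) ∂Pr) ≤
      (1 / 2) *
        ∫ ω, alignScore S δ (fun i : Fin (2 * n) => Z (Sum.inl ((i : ℕ) + 1)) ω)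
          (fun i : Fin (2 * n) => Z (Sum.inr ((i : ℕ) + 1)) ω) ∂Pr :=
  expected_unbalanced_score_le_half_general Pr Z hmeas hindep hid S hsymm δ n p q hpq
end
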